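/- Let X ⊆ ℤ × ℤ be a finite set of crossings with type map t : ℤ × ℤ → Bool, and suppose (X, t) has no Celtic configuration. Then every connected component of the problem crossing graph of (X, t) that is a lattice simple closed curve (i.e., a nonempty finite connected component in which every vertex has degree exactly 2) contains a vertex that is not a corner of the problem crossing graph. -/

import Mathlib

/-- Two points of the ℤ² lattice are adjacent if they differ by a unit vector. -/
def Adjacent (p q : ℤ × ℤ) : Prop :=
  p - q = (1, 0) ∨ p - q = (-1, 0) ∨ p - q = (0, 1) ∨ p - q = (0, -1)

/-- Two vectors in ℤ × ℤ are perpendicular if their dot product vanishes. -/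
def Perp (a b : ℤ × ℤ) : Prop := a.1 * b.1 + a.2 * b.2 = 0

lemma adjacent_symm {p q : ℤ × ℤ} (h : Adjacent p q) : Adjacent q p := by
  simp only [Adjacent, Prod.ext_iff, Prod.fst_sub, Prod.snd_sub] at h ⊢
  omega

/-- A Celtic configuration in `(X, t)` based at `p`. -/
def IsCeltic (X : Set (ℤ × ℤ)) (t : ℤ × ℤ → Bool) (p : ℤ × ℤ) : Prop :=
  p ∈ X ∧ p + (1, 0) ∈ X ∧ p + (0, 1) ∈ X ∧ p + (1, 1) ∈ X ∧
    t p = t (p + (1, 1)) ∧ t (p + (1, 0)) = t (p + (0, 1)) ∧ t p ≠ t (p + (1, 0))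

/-- A crossing `v` is resolved with respect to the height assignment `h`. -/
def Resolved (t : ℤ × ℤ → Bool) (h : ℤ × ℤ → ℤ × ℤ → ℤ) (v : ℤ × ℤ) : Prop :=
  if t v then
    (h v (v + (0, 1)) < h v (v + (1, 0)) ∧ h v (v + (0, 1)) < h v (v - (1, 0)) ∧
     h v (v - (0, 1)) < h v (v + (1, 0)) ∧ h v (v - (0, 1)) < h v (v - (1, 0)))
  else
    (h v (v + (1, 0)) < h v (v + (0, 1)) ∧ h v (v + (1, 0)) < h v (v - (0, 1)) ∧
     h v (v - (1, 0)) < h v (v + (0, 1)) ∧ h v (v - (1, 0)) < h v (v - (0, 1)))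

/-- `v ∈ X` is a problem crossing: it has a pair of nearby neighbors in `X`,
both of the opposite crossing type. -/
def ProblemCrossing (X : Set (ℤ × ℤ)) (t : ℤ × ℤ → Bool) (v : ℤ × ℤ) : Prop :=
  v ∈ X ∧ ∃ a b : ℤ × ℤ, a ∈ X ∧ b ∈ X ∧ a ≠ b ∧ Adjacent a v ∧ Adjacent b v ∧
    Perp (a - v) (b - v) ∧ t a ≠ t v ∧ t b ≠ t v

/-- `w` is a bad neighbor of `v`. -/
def BadNeighbor (X : Set (ℤ × ℤ)) (t : ℤ × ℤ → Bool) (v w : ℤ × ℤ) : Prop :=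
  v ∈ X ∧ w ∈ X ∧ Adjacent w v ∧ t w ≠ t v ∧
    ∃ u : ℤ × ℤ, u ∈ X ∧ Adjacent u v ∧ Perp (u - v) (w - v) ∧ t u ≠ t v

/-- The problem crossing graph of `(X, t)`. -/
def ProblemGraph (X : Set (ℤ × ℤ)) (t : ℤ × ℤ → Bool) : SimpleGraph (ℤ × ℤ) where
  Adj v w := v ≠ w ∧ ProblemCrossing X t v ∧ ProblemCrossing X t w ∧ Adjacent v w ∧
    BadNeighbor X t v w ∧ BadNeighbor X t w v
  symm := ⟨fun v w ⟨h1, h2, h3, h4, h5, h6⟩ => ⟨h1.symm, h3, h2, adjacent_symm h4, h6, h5⟩⟩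
  loopless := ⟨fun v h => h.1 rfl⟩

/-- `v` has exactly two neighbors in `G` (degree exactly 2). -/
def DegreeTwo (G : SimpleGraph (ℤ × ℤ)) (v : ℤ × ℤ) : Prop :=
  ∃ a b : ℤ × ℤ, a ≠ b ∧ G.Adj v a ∧ G.Adj v b ∧ ∀ c : ℤ × ℤ, G.Adj v c → c = a ∨ c = b

/-- `v` is a corner of `G`: it has exactly two neighbors and they lie in
perpendicular directions from `v`. -/
def GraphCorner (G : SimpleGraph (ℤ × ℤ)) (v : ℤ × ℤ) : Prop :=
  ∃ a b : ℤ × ℤ, a ≠ b ∧ G.Adj v a ∧ G.Adj v b ∧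
    (∀ c : ℤ × ℤ, G.Adj v c → c = a ∨ c = b) ∧ Perp (a - v) (b - v)


/-!
Every edge of the problem crossing graph joins lattice-adjacent crossings of opposite types.
If all vertices of a finite component were corners, look at its lowest vertex `v`, leftmost
among the lowest. Its two neighbours can only be `v + (1,0)` and `v + (0,1)`; the corner at
`v + (1,0)` then turns upwards to `v + (1,1)`. Alternating types around the three edges
`v — v + (1,0) — v + (1,1)` and `v — v + (0,1)` make the unit square at `v` a Celtic
configuration.
-/

/-- The reading order on `ℤ × ℤ`: bottom row first, left to right within a row. -/
def rowMajor (p : ℤ × ℤ) : Lex (ℤ × ℤ) := toLex (p.2, p.1)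

lemma Adjacent.eq_right_or_up {v w : ℤ × ℤ} (hadj : Adjacent w v)
    (hle : rowMajor v ≤ rowMajor w) : w = v + (1, 0) ∨ w = v + (0, 1) := by
  simp only [Adjacent, rowMajor, Prod.Lex.toLex_le_toLex, Prod.ext_iff, Prod.fst_sub,
    Prod.snd_sub, Prod.fst_add, Prod.snd_add] at hadj hle ⊢
  omega

lemma Adjacent.eq_up_of_perp_left {v c : ℤ × ℤ} (hadj : Adjacent c (v + (1, 0)))
    (hperp : Perp (v - (v + (1, 0))) (c - (v + (1, 0)))) (hle : rowMajor v ≤ rowMajor c) :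
    c = v + (1, 1) := by
  simp only [Adjacent, Perp, rowMajor, Prod.Lex.toLex_le_toLex, Prod.ext_iff, Prod.fst_sub,
    Prod.snd_sub, Prod.fst_add, Prod.snd_add] at hadj hperp hle ⊢
  omega

lemma GraphCorner.exists_perp_adj {G : SimpleGraph (ℤ × ℤ)} {w v : ℤ × ℤ}
    (hw : GraphCorner G w) (hwv : G.Adj w v) : ∃ c, G.Adj w c ∧ Perp (v - w) (c - w) := by
  obtain ⟨a, b, -, hwa, hwb, hall, hperp⟩ := hw
  rcases hall v hwv with rfl | rfl
  · exact ⟨b, hwb, hperp⟩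
  · refine ⟨a, hwa, ?_⟩
    unfold Perp at hperp ⊢
    linarith

section LatticeGraph

variable {G : SimpleGraph (ℤ × ℤ)}

theorem exists_unit_square_of_forall_corner (hG : ∀ v w, G.Adj v w → Adjacent w v)
    (C : G.ConnectedComponent) (hfin : C.supp.Finite)
    (hcorner : ∀ v ∈ C.supp, GraphCorner G v) :
    ∃ v, G.Adj v (v + (1, 0)) ∧ G.Adj v (v + (0, 1)) ∧ G.Adj (v + (1, 0)) (v + (1, 1)) := by
  obtain ⟨v, hv, hmin⟩ := Set.exists_min_image C.supp rowMajor hfin C.nonempty_supp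
  have right_or_up : ∀ w, G.Adj v w → w = v + (1, 0) ∨ w = v + (0, 1) := fun w hvw =>
    (hG v w hvw).eq_right_or_up (hmin w (C.mem_supp_of_adj_mem_supp hv hvw))
  obtain ⟨a, b, hab, hva, hvb, -⟩ := hcorner v hv
  have hright_up : G.Adj v (v + (1, 0)) ∧ G.Adj v (v + (0, 1)) := by
    rcases right_or_up a hva with rfl | rfl <;> rcases right_or_up b hvb with rfl | rfl
    exacts [absurd rfl hab, ⟨hva, hvb⟩, ⟨hvb, hva⟩, absurd rfl hab]
  obtain ⟨hright, hup⟩ := hright_up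
  have hw := C.mem_supp_of_adj_mem_supp hv hright
  obtain ⟨c, hwc, hperp⟩ := (hcorner _ hw).exists_perp_adj hright.symm
  have hc : c = v + (1, 1) :=
    (hG _ c hwc).eq_up_of_perp_left hperp (hmin c (C.mem_supp_of_adj_mem_supp hw hwc))
  exact ⟨v, hright, hup, hc ▸ hwc⟩

end LatticeGraph

namespace ProblemGraph

variable {X : Set (ℤ × ℤ)} {t : ℤ × ℤ → Bool} {v w : ℤ × ℤ}

lemma mem_of_adj (h : (ProblemGraph X t).Adj v w) : v ∈ X := h.2.1.1

lemma adjacent_of_adj (h : (ProblemGraph X t).Adj v w) : Adjacent w v := h.2.2.2.2.1.2.2.1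

lemma type_ne_of_adj (h : (ProblemGraph X t).Adj v w) : t v ≠ t w :=
  fun he => h.2.2.2.2.1.2.2.2.1 he.symm

end ProblemGraph

lemma Bool.eq_of_ne_of_ne {a b c : Bool} (hab : a ≠ b) (hbc : b ≠ c) : a = c := by
  cases a <;> cases b <;> cases c <;> simp_all

theorem cycle_component_has_noncorner_general
    (X : Set (ℤ × ℤ)) (t : ℤ × ℤ → Bool)
    (hcc : ¬ ∃ p : ℤ × ℤ, IsCeltic X t p)
    (C : (ProblemGraph X t).ConnectedComponent)
    (hfin : C.supp.Finite) :
    ∃ v ∈ C.supp, ¬ GraphCorner (ProblemGraph X t) v := by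
  by_contra! hcorner
  obtain ⟨v, hright, hup, hdiag⟩ := exists_unit_square_of_forall_corner
    (fun _ _ => ProblemGraph.adjacent_of_adj) C hfin hcorner
  open ProblemGraph in
  exact hcc ⟨v, mem_of_adj hright, mem_of_adj hdiag, mem_of_adj hup.symm, mem_of_adj hdiag.symm,
    Bool.eq_of_ne_of_ne (type_ne_of_adj hright) (type_ne_of_adj hdiag),
    Bool.eq_of_ne_of_ne (type_ne_of_adj hright).symm (type_ne_of_adj hup),
    type_ne_of_adj hright⟩

/-- If `(X, t)` has no Celtic configuration, then every connected component of
the problem crossing graph that is a lattice simple closed curve (finite, with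
every vertex of degree exactly 2) contains a vertex that is not a corner. -/
theorem cycle_component_has_noncorner
    (X : Set (ℤ × ℤ)) (hX : X.Finite) (t : ℤ × ℤ → Bool)
    (hcc : ¬ ∃ p : ℤ × ℤ, IsCeltic X t p)
    (C : (ProblemGraph X t).ConnectedComponent)
    (hfin : C.supp.Finite)
    (hdeg : ∀ v ∈ C.supp, DegreeTwo (ProblemGraph X t) v) :
    ∃ v ∈ C.supp, ¬ GraphCorner (ProblemGraph X t) v :=
  cycle_component_has_noncorner_general X t hcc C hfin
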